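/- arXiv:1503.04418 — 2 statements merged into one kernel-verified Lean document; each statement's English description precedes it below -/
import Mathlib

section
/- Let F be a field of characteristic 2 and let R be a finite-dimensional totally singular conic F-algebra. Then R is commutative, R is a local ring, and its unique maximal ideal is 𝔪 = {x ∈ R : x² = 0}. Moreover, for every u ∈ R not in (the image of) F, the subalgebra F[u] generated by u is a field if and only if u² is not the square of an element of F. -/
/-!
Polarising `(x + y)² ∈ F` shows that `b(x, y) := xy + yx` is a scalar, and then
`b(x, y) x = b(x, xy)` is a scalar too; so `b(x, y) ≠ 0` would force `x ∈ F`, whence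
`b(x, y) = 2xy = 0`. Thus `R` is anticommutative, i.e. commutative in characteristic 2.
Every `x` has `x² = a ∈ F`, so `x` is a unit when `a ≠ 0` and square-zero otherwise;
square-zero elements are closed under addition, which makes `R` local with maximal ideal
`{x | x² = 0}`. The subalgebra `F[u]` inherits all this, so it is a field iff it has no nonzero
square-zero element. Writing its elements as `c + d u`, such an element exists iff
`u² = (c / d)²`, and if `u² = b²` then `u - b` is one.
-/

/-- The minimum rank of a finite-dimensional `F`-algebra `R`: the least cardinality of a
subset of `R` generating `R` as an `F`-algebra. -/
noncomputable def minRank (F R : Type*) [CommSemiring F] [Semiring R] [Algebra F R] : ℕ :=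
  sInf {n : ℕ | ∃ s : Finset R, s.card = n ∧ Algebra.adjoin F (s : Set R) = ⊤}

theorem exists_eq_add_mul_of_mem_adjoin_singleton {F R : Type*} [Field F] [CommRing R]
    [Algebra F R] {u : R} {a : F} (ha : u ^ 2 = algebraMap F R a) {x : R}
    (hx : x ∈ Algebra.adjoin F {u}) :
    ∃ c d : F, x = algebraMap F R c + algebraMap F R d * u := by
  induction hx using Algebra.adjoin_induction with
  | mem y hy =>
    rw [Set.mem_singleton_iff.mp hy]
    exact ⟨0, 1, by simp⟩
  | algebraMap c => exact ⟨c, 0, by simp⟩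
  | add x y _ _ hx hy =>
    obtain ⟨c, d, rfl⟩ := hx
    obtain ⟨c', d', rfl⟩ := hy
    exact ⟨c + c', d + d', by simp only [map_add]; ring⟩
  | mul x y _ _ hx hy =>
    obtain ⟨c, d, rfl⟩ := hx
    obtain ⟨c', d', rfl⟩ := hy
    refine ⟨c * c' + d * d' * a, c * d' + d * c', ?_⟩
    simp only [map_add, map_mul]
    linear_combination (algebraMap F R d * algebraMap F R d') * ha

def IsTotallySingularConic (F R : Type*) [CommSemiring F] [Semiring R] [Algebra F R] : Prop :=
  ∀ x : R, ∃ a : F, x ^ 2 = algebraMap F R a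

namespace IsTotallySingularConic

variable {F R : Type*}

theorem subalgebra [CommSemiring F] [Semiring R] [Algebra F R] (h : IsTotallySingularConic F R)
    (S : Subalgebra F R) : IsTotallySingularConic F S := fun x ↦ by
  obtain ⟨a, ha⟩ := h x
  exact ⟨a, Subtype.ext ha⟩

section Ring

variable [Field F] [Ring R] [Algebra F R]

theorem exists_mul_add_mul_eq_algebraMap (h : IsTotallySingularConic F R) (x y : R) :
    ∃ c : F, x * y + y * x = algebraMap F R c := by
  obtain ⟨a, ha⟩ := h x
  obtain ⟨b, hb⟩ := h y
  obtain ⟨e, he⟩ := h (x + y)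
  refine ⟨e - a - b, ?_⟩
  rw [map_sub, map_sub, ← ha, ← hb, ← he]
  noncomm_ring

theorem mul_add_mul_eq_zero [CharP R 2] (h : IsTotallySingularConic F R) (x y : R) :
    x * y + y * x = 0 := by
  obtain ⟨c, hc⟩ := h.exists_mul_add_mul_eq_algebraMap x y
  obtain ⟨c', hc'⟩ := h.exists_mul_add_mul_eq_algebraMap x (x * y)
  obtain ⟨a, ha⟩ := h x
  -- `x²` is a scalar, hence central; this gives `(xy + yx) x = x (xy) + (xy) x`.
  have hyx : y * (x * x) = x * (x * y) := by
    rw [← mul_assoc x x y, ← sq, ha, Algebra.commutes]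
  have hcx : algebraMap F R c * x = algebraMap F R c' := by
    rw [← hc, ← hc', add_mul, mul_assoc, mul_assoc, hyx]
    abel
  by_cases hc0 : c = 0
  · rwa [hc0, map_zero] at hc
  have hx : x = algebraMap F R (c⁻¹ * c') := by
    rw [map_mul, ← hcx, ← mul_assoc, ← map_mul, inv_mul_cancel₀ hc0, map_one, one_mul]
  rw [hx, ← Algebra.commutes, CharTwo.add_self_eq_zero]

theorem mul_comm [CharP R 2] (h : IsTotallySingularConic F R) (x y : R) : x * y = y * x :=
  CharTwo.add_eq_zero.mp (h.mul_add_mul_eq_zero x y)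

theorem isUnit_or_sq_eq_zero (h : IsTotallySingularConic F R) (x : R) :
    IsUnit x ∨ x ^ 2 = 0 := by
  obtain ⟨a, ha⟩ := h x
  by_cases ha0 : a = 0
  · exact Or.inr (by rw [ha, ha0, map_zero])
  · refine Or.inl ((isUnit_pow_iff two_ne_zero).mp ?_)
    exact ha ▸ (Ne.isUnit ha0).map (algebraMap F R)

theorem not_isUnit_iff_sq_eq_zero [Nontrivial R] (h : IsTotallySingularConic F R)
    {x : R} : ¬IsUnit x ↔ x ^ 2 = 0 := by
  refine ⟨(h.isUnit_or_sq_eq_zero x).resolve_left, fun hx hu ↦ ?_⟩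
  exact not_isUnit_zero (hx ▸ hu.pow 2)

theorem isLocalRing [CharP R 2] [Nontrivial R] (h : IsTotallySingularConic F R) :
    IsLocalRing R := by
  refine IsLocalRing.of_nonunits_add fun x y hx hy ↦ ?_
  rw [mem_nonunits_iff, h.not_isUnit_iff_sq_eq_zero] at hx hy ⊢
  have hxy : (x + y) ^ 2 = x ^ 2 + (x * y + y * x) + y ^ 2 := by noncomm_ring
  rw [hxy, hx, hy, h.mul_add_mul_eq_zero, add_zero, add_zero]

end Ring

section CommRing

variable [Field F] [CommRing R] [Algebra F R]

theorem mem_maximalIdeal_iff [IsLocalRing R] (h : IsTotallySingularConic F R) {x : R} :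
    x ∈ IsLocalRing.maximalIdeal R ↔ x ^ 2 = 0 := by
  rw [IsLocalRing.mem_maximalIdeal, mem_nonunits_iff, h.not_isUnit_iff_sq_eq_zero]

theorem isField_iff [Nontrivial R] (h : IsTotallySingularConic F R) :
    IsField R ↔ ∀ x : R, x ^ 2 = 0 → x = 0 := by
  refine ⟨fun hR x hx ↦ ?_, fun hR ↦ ⟨exists_pair_ne R, _root_.mul_comm, fun hx ↦ ?_⟩⟩
  · by_contra hx0
    obtain ⟨y, hy⟩ := hR.mul_inv_cancel hx0
    exact hx0 (by rw [← mul_one x, ← hy, ← mul_assoc, ← sq, hx, zero_mul])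
  · exact ((h.isUnit_or_sq_eq_zero _).resolve_right (mt (hR _) hx)).exists_right_inv

theorem isField_subalgebra_iff [Nontrivial R] (h : IsTotallySingularConic F R)
    (S : Subalgebra F R) : IsField S ↔ ∀ x ∈ S, x ^ 2 = 0 → x = 0 := by
  rw [(h.subalgebra S).isField_iff, Subtype.forall]
  simp only [Subtype.ext_iff, SubmonoidClass.coe_pow, ZeroMemClass.coe_zero]

theorem exists_sq_eq_algebraMap_sq_of_mem_adjoin [CharP R 2] [Nontrivial R]
    (h : IsTotallySingularConic F R) {u x : R} (hx : x ∈ Algebra.adjoin F {u}) (hx0 : x ≠ 0)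
    (hx2 : x ^ 2 = 0) : ∃ b : F, u ^ 2 = algebraMap F R (b ^ 2) := by
  obtain ⟨a, ha⟩ := h u
  obtain ⟨c, d, rfl⟩ := exists_eq_add_mul_of_mem_adjoin_singleton ha hx
  rw [CharTwo.add_sq, mul_pow, ← map_pow, ← map_pow] at hx2
  have hd : d ≠ 0 := by
    rintro rfl
    rw [zero_pow two_ne_zero, map_zero, zero_mul, add_zero,
      map_eq_zero_iff _ (algebraMap F R).injective, pow_eq_zero_iff two_ne_zero] at hx2
    simp [hx2] at hx0
  refine ⟨c / d, ?_⟩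
  rw [div_pow, div_eq_inv_mul, map_mul, CharTwo.add_eq_zero.mp hx2, ← mul_assoc, ← map_mul,
    inv_mul_cancel₀ (pow_ne_zero 2 hd), map_one, one_mul]

theorem isField_adjoin_singleton_iff [CharP R 2] [Nontrivial R] (h : IsTotallySingularConic F R)
    {u : R} (hu : u ∉ Set.range (algebraMap F R)) :
    IsField (Algebra.adjoin F {u}) ↔ ¬∃ b : F, u ^ 2 = algebraMap F R (b ^ 2) := by
  rw [h.isField_subalgebra_iff]
  refine ⟨fun hred ⟨b, hb⟩ ↦ ?_, fun hu2 x hx hx2 ↦ ?_⟩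
  · refine sub_ne_zero_of_ne (fun hub ↦ hu ⟨b, hub.symm⟩) (hred _ ?_ ?_)
    · exact sub_mem (Algebra.self_mem_adjoin_singleton F u) (Subalgebra.algebraMap_mem _ b)
    · rw [sub_pow_char, hb, map_pow, sub_self]
  · by_contra hx0
    exact hu2 (h.exists_sq_eq_algebraMap_sq_of_mem_adjoin hx hx0 hx2)

end CommRing

end IsTotallySingularConic

theorem stmt_0_general (F R : Type*) [Field F] [CharP F 2] [Ring R] [Algebra F R]
    [Nontrivial R]
    (hconic : ∀ x : R, ∃ a : F, x ^ 2 = algebraMap F R a) :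
    (∀ x y : R, x * y = y * x) ∧
    IsLocalRing R ∧
    (∀ I : Ideal R, I.IsMaximal → (I : Set R) = {x : R | x ^ 2 = 0}) ∧
    (∀ u : R, u ∉ Set.range (algebraMap F R) →
      (IsField (Algebra.adjoin F ({u} : Set R)) ↔ ¬∃ a : F, u ^ 2 = algebraMap F R (a ^ 2))) := by
  have h : IsTotallySingularConic F R := hconic
  have : CharP R 2 := charP_of_injective_algebraMap' F 2
  have hlocal := h.isLocalRing
  let : CommRing R := { ‹Ring R› with mul_comm := h.mul_comm }
  refine ⟨h.mul_comm, hlocal, fun I hI ↦ ?_, fun u hu ↦ ?_⟩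
  · ext x
    rw [IsLocalRing.eq_maximalIdeal hI]
    exact h.mem_maximalIdeal_iff
  · exact h.isField_adjoin_singleton_iff hu

theorem stmt_0 (F R : Type*) [Field F] [CharP F 2] [Ring R] [Algebra F R]
    [FiniteDimensional F R] [Nontrivial R]
    (hconic : ∀ x : R, ∃ a : F, x ^ 2 = algebraMap F R a) :
    (∀ x y : R, x * y = y * x) ∧
    IsLocalRing R ∧
    (∀ I : Ideal R, I.IsMaximal → (I : Set R) = {x : R | x ^ 2 = 0}) ∧
    (∀ u : R, u ∉ Set.range (algebraMap F R) →
      (IsField (Algebra.adjoin F ({u} : Set R)) ↔ ¬∃ a : F, u ^ 2 = algebraMap F R (a ^ 2))) :=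
  stmt_0_general F R hconic
end

section
/- Let F be a field of characteristic 2 and let R be a finite-dimensional totally singular conic F-algebra. If dim_F R = 2^{r_F(R)}, then R is a Frobenius F-algebra, i.e., there exists a nondegenerate associative F-bilinear form on R. -/
open scoped symmDiff

theorem mul_comm_of_forall_sq_eq_algebraMap {F R : Type*} [Field F] [CharP F 2] [Ring R]
    [Algebra F R] (hsq : ∀ x : R, ∃ a : F, x ^ 2 = algebraMap F R a) (x y : R) :
    x * y = y * x := by
  obtain ⟨a, ha⟩ := hsq x
  obtain ⟨b, hb⟩ := hsq y
  obtain ⟨s, hs⟩ := hsq (x + y)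
  obtain ⟨d, hd⟩ := hsq (x * y)
  set c := s - a - b
  have hyx : y * x = algebraMap F R c - x * y := by
    rw [map_sub, map_sub, ← hs, ← ha, ← hb]; noncomm_ring
  by_cases hc : c = 0
  · have two_eq_zero : (2 : R) = 0 := by
      rw [← map_ofNat (algebraMap F R) 2, CharTwo.two_eq_zero, map_zero]
    rw [hyx, hc, map_zero]
    calc x * y = x * y - 2 * (x * y) := by rw [two_eq_zero, zero_mul, sub_zero]
      _ = 0 - x * y := by noncomm_ring
  suffices x = 0 by rw [this, zero_mul, mul_zero]
  -- For `c ≠ 0`, `c • xy = (xy)(yx) + (xy)² = x y² x + (xy)²` makes `xy` a scalar, and then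
  -- comparing `(xy)x` with `x(yx) = x(c - xy)` gives `c • x = 2 • (xy)x = 0`.
  have hxy : c • (x * y) = algebraMap F R (a * b + d) := by
    have hprod : x * y * (y * x) = algebraMap F R (a * b) := by
      rw [show x * y * (y * x) = x * (y ^ 2 * x) by noncomm_ring, hb, Algebra.left_comm, ← sq,
        ha, ← map_mul, mul_comm]
    rw [hyx, mul_sub, ← sq, hd, ← Algebra.commutes, ← Algebra.smul_def] at hprod
    rw [map_add, ← hprod, sub_add_cancel]
  set α := c⁻¹ * (a * b + d)
  have hxy_scalar : x * y = algebraMap F R α := by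
    rw [map_mul, ← Algebra.smul_def, ← hxy, inv_smul_smul₀ hc]
  have hcx : c • x = 0 := by
    have hassoc : x * (y * x) = x * y * x := (mul_assoc x y x).symm
    rw [hyx, hxy_scalar, ← map_sub, ← Algebra.commutes, ← Algebra.smul_def,
      ← Algebra.smul_def] at hassoc
    calc c • x = (c - α) • x + α • x := by rw [← add_smul, sub_add_cancel]
      _ = (2 * α) • x := by rw [hassoc, ← add_smul, two_mul]
      _ = 0 := by rw [CharTwo.two_eq_zero, zero_mul, zero_smul]
  exact (smul_eq_zero.mp hcx).resolve_left hc

theorem prod_mul_prod_eq_sq_prod_inter_mul_prod_symmDiff {ι M : Type*} [CommMonoid M]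
    [DecidableEq ι] (f : ι → M) (s t : Finset ι) :
    (∏ i ∈ s, f i) * ∏ i ∈ t, f i = (∏ i ∈ s ∩ t, f i) ^ 2 * ∏ i ∈ s ∆ t, f i := by
  rw [← Finset.prod_union_inter, ← Finset.sup_eq_union, ← symmDiff_sup_inf,
    Finset.sup_eq_union, Finset.prod_union (disjoint_symmDiff_inf s t), Finset.inf_eq_inter,
    mul_assoc, mul_comm, sq]

theorem exists_adjoin_eq_top_finset_card_eq_minRank (F R : Type*) [CommSemiring F] [Semiring R]
    [Algebra F R] [Algebra.FiniteType F R] :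
    ∃ s : Finset R, s.card = minRank F R ∧ Algebra.adjoin F (s : Set R) = ⊤ := by
  obtain ⟨s, hs⟩ := Algebra.FiniteType.out (R := F) (A := R)
  exact Nat.sInf_mem (s := {n | ∃ s : Finset R, s.card = n ∧ Algebra.adjoin F (s : Set R) = ⊤})
    ⟨s.card, s, rfl, hs⟩

theorem exists_nondegenerate_associative_form {F R : Type*} [CommSemiring F] [CommSemiring R]
    [Algebra F R] (l : R →ₗ[F] F) (hl : ∀ x : R, (∀ y, l (x * y) = 0) → x = 0) :
    ∃ b : R →ₗ[F] R →ₗ[F] F,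
      (∀ x y z : R, b (x * y) z = b x (y * z)) ∧
      (∀ x : R, (∀ y : R, b x y = 0) → x = 0) ∧
      (∀ y : R, (∀ x : R, b x y = 0) → y = 0) := by
  refine ⟨(LinearMap.mul F R).compr₂ l, fun x y z => ?_, hl, fun y hy => hl y fun x => ?_⟩
  · simp only [LinearMap.compr₂_apply, LinearMap.mul_apply', mul_assoc]
  · simpa [mul_comm] using hy x

section Monomials

variable {F R ι : Type*}

theorem exists_prod_mul_prod_eq_smul_prod_symmDiff [CommSemiring F] [CommSemiring R] [Algebra F R]
    (v : ι → R) (hsq : ∀ x : R, ∃ a : F, x ^ 2 = algebraMap F R a) [DecidableEq ι]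
    (s t : Finset ι) :
    ∃ a : F, (∏ i ∈ s, v i) * ∏ i ∈ t, v i = a • ∏ i ∈ s ∆ t, v i := by
  obtain ⟨a, ha⟩ := hsq (∏ i ∈ s ∩ t, v i)
  exact ⟨a, by rw [prod_mul_prod_eq_sq_prod_inter_mul_prod_symmDiff, ha, Algebra.smul_def]⟩

theorem span_range_prod_eq_top [CommSemiring F] [CommSemiring R] [Algebra F R] (v : ι → R)
    (hsq : ∀ x : R, ∃ a : F, x ^ 2 = algebraMap F R a)
    (hv : Algebra.adjoin F (Set.range v) = ⊤) :
    Submodule.span F (Set.range fun t : Finset ι => ∏ i ∈ t, v i) = ⊤ := by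
  classical
  set M := Submodule.span F (Set.range fun t : Finset ι => ∏ i ∈ t, v i)
  have one_mem : (1 : R) ∈ M := Submodule.subset_span ⟨∅, Finset.prod_empty⟩
  have mul_mem : ∀ x y, x ∈ M → y ∈ M → x * y ∈ M := by
    intro x y hx hy
    refine (Submodule.span_mul_span F _ _).le.trans (Submodule.span_le.mpr ?_)
      (Submodule.mul_mem_mul hx hy)
    rintro _ ⟨_, ⟨s, rfl⟩, _, ⟨t, rfl⟩, rfl⟩
    obtain ⟨a, ha⟩ := exists_prod_mul_prod_eq_smul_prod_symmDiff v hsq s t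
    simp only [SetLike.mem_coe, ha]
    exact M.smul_mem a (Submodule.subset_span ⟨_, rfl⟩)
  have hle : Algebra.adjoin F (Set.range v) ≤ M.toSubalgebra one_mem mul_mem :=
    Algebra.adjoin_le <| Set.range_subset_iff.mpr fun i =>
      Submodule.subset_span ⟨{i}, Finset.prod_singleton v i⟩
  rw [hv, top_le_iff] at hle
  exact eq_top_iff.mpr fun x _ => (hle ▸ Algebra.mem_top : x ∈ M.toSubalgebra one_mem mul_mem)

variable [Field F] [CommRing R] [Algebra F R] [Fintype ι] (v : ι → R)
  (hsq : ∀ x : R, ∃ a : F, x ^ 2 = algebraMap F R a)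

noncomputable def monomialBasis (hv : Algebra.adjoin F (Set.range v) = ⊤)
    (hdim : Module.finrank F R = 2 ^ Fintype.card ι) : Module.Basis (Finset ι) F R :=
  basisOfTopLeSpanOfCardEqFinrank _ (span_range_prod_eq_top v hsq hv).ge
    (by rw [Fintype.card_finset, hdim])

variable (hv : Algebra.adjoin F (Set.range v) = ⊤)
  (hdim : Module.finrank F R = 2 ^ Fintype.card ι)

theorem coe_monomialBasis : ⇑(monomialBasis v hsq hv hdim) = fun t => ∏ i ∈ t, v i :=
  coe_basisOfTopLeSpanOfCardEqFinrank _ _ _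

theorem monomialBasis_coord_univ_prod_mul_prod_compl [DecidableEq ι] (s t : Finset ι) :
    (monomialBasis v hsq hv hdim).coord Finset.univ ((∏ i ∈ s, v i) * ∏ i ∈ tᶜ, v i) =
      if s = t then 1 else 0 := by
  set B := monomialBasis v hsq hv hdim
  have hB : ∀ u, ∏ i ∈ u, v i = B u := fun u => by rw [coe_monomialBasis]
  by_cases hst : s = t
  · rw [if_pos hst, hst, prod_mul_prod_eq_sq_prod_inter_mul_prod_symmDiff, Finset.inter_compl,
      symmDiff_compl_self, Finset.top_eq_univ, Finset.prod_empty, one_pow, one_mul, hB,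
      B.coord_apply, B.repr_self_apply, if_pos rfl]
  · obtain ⟨a, ha⟩ := exists_prod_mul_prod_eq_smul_prod_symmDiff v hsq s tᶜ
    have hne : s ∆ tᶜ ≠ Finset.univ := fun h =>
      hst (((symmDiff_eq_top s tᶜ).mp h).left_unique isCompl_compl)
    rw [if_neg hst, ha, hB, map_smul, B.coord_apply, B.repr_self_apply, if_neg hne, smul_zero]

theorem monomialBasis_coord_apply [DecidableEq ι] (t : Finset ι) (x : R) :
    (monomialBasis v hsq hv hdim).coord t x =
      (monomialBasis v hsq hv hdim).coord Finset.univ (x * ∏ i ∈ tᶜ, v i) := by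
  set B := monomialBasis v hsq hv hdim
  suffices B.coord t = (B.coord Finset.univ).comp (LinearMap.mulRight F (∏ i ∈ tᶜ, v i)) from
    LinearMap.congr_fun this x
  refine B.ext fun s => ?_
  rw [LinearMap.comp_apply, LinearMap.mulRight_apply, coe_monomialBasis,
    monomialBasis_coord_univ_prod_mul_prod_compl, ← coe_monomialBasis v hsq hv hdim,
    B.coord_apply, B.repr_self_apply]

end Monomials

theorem stmt_1 (F R : Type*) [Field F] [CharP F 2] [Ring R] [Algebra F R]
    [FiniteDimensional F R]
    (hconic : ∀ x : R, ∃ a : F, x ^ 2 = algebraMap F R a)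
    (hdim : Module.finrank F R = 2 ^ minRank F R) :
    ∃ b : R →ₗ[F] R →ₗ[F] F,
      (∀ x y z : R, b (x * y) z = b x (y * z)) ∧
      (∀ x : R, (∀ y : R, b x y = 0) → x = 0) ∧
      (∀ y : R, (∀ x : R, b x y = 0) → y = 0) := by
  classical
  let _ : CommRing R := { ‹Ring R› with mul_comm := mul_comm_of_forall_sq_eq_algebraMap hconic }
  obtain ⟨s, hcard, hs⟩ := exists_adjoin_eq_top_finset_card_eq_minRank F R
  let B := monomialBasis ((↑) : s → R) hconic (by rwa [Subtype.range_coe])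
    (by rwa [Fintype.card_coe, hcard])
  refine exists_nondegenerate_associative_form (B.coord Finset.univ) fun x hx =>
    B.forall_coord_eq_zero_iff.mp fun t => ?_
  rw [monomialBasis_coord_apply]
  exact hx _
end
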